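/- Let α ∈ (0,1) be irrational, M ≥ 1, and let n have Ostrowski representation with both a nonzero digit at some index < M and a nonzero digit at some index ≥ M. Let k_{≥M}(n) denote the smallest index ≥ M with nonzero digit. Then for every T with q_{T−2} ≥ n, one has k_{≥M}(n) ≡ k_{≥M}(q_T − n) (mod 2). -/

import Mathlib

/-- Gauss-map iterates of `α`. -/
noncomputable def cfFrac (α : ℝ) : ℕ → ℝ
  | 0 => α
  | k + 1 => Int.fract (1 / cfFrac α k)

/-- Partial quotients of `α` (1-indexed, `cfA α 0 = 0` unused). -/
noncomputable def cfA (α : ℝ) : ℕ → ℕ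
  | 0 => 0
  | k + 1 => (⌊1 / cfFrac α k⌋).toNat

/-- Numerators of the convergents of `α`. -/
noncomputable def cfP (α : ℝ) : ℕ → ℕ
  | 0 => 0
  | 1 => 1
  | k + 2 => cfA α (k + 2) * cfP α (k + 1) + cfP α k

/-- Denominators of the convergents of `α`. -/
noncomputable def cfQ (α : ℝ) : ℕ → ℕ
  | 0 => 1
  | 1 => cfA α 1
  | k + 2 => cfA α (k + 2) * cfQ α (k + 1) + cfQ α k

/-- Distance from `x` to the nearest integer. -/
noncomputable def distNearInt (x : ℝ) : ℝ := min (Int.fract x) (1 - Int.fract x)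

/-- `b` is the sequence of digits of an Ostrowski representation of `n` w.r.t. `α`:
`n = Σ b_k q_k` with `0 ≤ b_0 ≤ a_1 - 1`, `0 ≤ b_k ≤ a_{k+1}` for `k ≥ 1`, and
`b_{k-1} = 0` whenever `b_k = a_{k+1}`. -/
def OstrowskiRep (α : ℝ) (n : ℕ) (b : ℕ → ℕ) : Prop :=
  b 0 ≤ cfA α 1 - 1 ∧
  (∀ k, 1 ≤ k → b k ≤ cfA α (k + 1)) ∧
  (∀ k, 1 ≤ k → b k = cfA α (k + 1) → b (k - 1) = 0) ∧
  ∃ N, (∀ k, N < k → b k = 0) ∧ n = ∑ k ∈ Finset.range (N + 1), b k * cfQ α k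

/-!
Write `θ_k = q_k α - p_k` and `D_k = |θ_k|`, so that `θ_k = (-1)^k D_k`, `D_k` decreases strictly
and `D_{k+1} = D_{k-1} - a_{k+1} D_k`. For admissible digits `c` whose first nonzero digit at an index
`≥ M` sits at `K`, the high error `S = Σ_{M ≤ k < T} c_k θ_k` has sign `(-1)^K` and
`D_T ≤ |S| ≤ c_K D_K + D_{K+1} - D_T ≤ D_{K-1} - D_T`.

Split `n` and `q_T - n` at `M` into low parts `u, u' < q_M` and high parts with errors `S, S'`.
Since the two numbers add up to `q_T`, `(u + u') α - r = θ_T - S - S'` for some integer `r`.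
If `S` and `S'` had opposite signs, they would nearly cancel, giving `|(u + u') α - r| < D_{M-1}`
with `0 < u + u' < 2 q_M`; expanding `(u + u', r)` in the basis `(q_{M-1}, p_{M-1}), (q_M, p_M)`
leaves only `u + u' = q_M` or `u + u' = q_{M-1} + q_M`. In both cases the size bounds on `|S|`,
`|S'|` are violated, except when the digit at `M` is maximal; but then the digit at `M - 1`
vanishes, so the low part is `< q_{M-1}`, and `u + u' < q_{M-1} + q_M`.
-/

theorem neg_one_pow_mul_self {R : Type*} [Monoid R] [HasDistribNeg R] (k : ℕ) :
    (-1 : R) ^ k * (-1) ^ k = 1 := by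
  rw [← pow_add, ← two_mul, pow_mul, neg_one_sq, one_pow]

theorem abs_neg_one_pow_mul {R : Type*} [Ring R] [LinearOrder R] [IsOrderedRing R] (k : ℕ)
    (x : R) : |(-1) ^ k * x| = |x| := by
  rw [abs_mul, abs_pow, abs_neg, abs_one, one_pow, one_mul]

section ContinuedFraction

variable {α : ℝ}

theorem cfFrac_mem_Ioo_and_irrational (hα : α ∈ Set.Ioo (0 : ℝ) 1) (hirr : Irrational α)
    (k : ℕ) : cfFrac α k ∈ Set.Ioo (0 : ℝ) 1 ∧ Irrational (cfFrac α k) := by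
  induction k with
  | zero => exact ⟨hα, hirr⟩
  | succ k ih =>
    have hfract : Irrational (Int.fract (1 / cfFrac α k)) := by
      rw [one_div, Int.fract]
      exact ih.2.inv.sub_intCast _
    exact ⟨⟨hfract.ne_zero.symm.lt_of_le (Int.fract_nonneg _), Int.fract_lt_one _⟩, hfract⟩

theorem one_le_floor_one_div_cfFrac (hα : α ∈ Set.Ioo (0 : ℝ) 1) (hirr : Irrational α) (k : ℕ) :
    1 ≤ ⌊1 / cfFrac α k⌋ := by
  obtain ⟨⟨h0, h1⟩, -⟩ := cfFrac_mem_Ioo_and_irrational hα hirr k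
  exact Int.le_floor.2 (by rw [Int.cast_one, le_div_iff₀ h0]; linarith)

theorem cfA_succ_eq_floor (hα : α ∈ Set.Ioo (0 : ℝ) 1) (hirr : Irrational α) (k : ℕ) :
    (cfA α (k + 1) : ℤ) = ⌊1 / cfFrac α k⌋ := by
  have := one_le_floor_one_div_cfFrac hα hirr k
  simp only [cfA]
  omega

theorem one_le_cfA_succ (hα : α ∈ Set.Ioo (0 : ℝ) 1) (hirr : Irrational α) (k : ℕ) :
    1 ≤ cfA α (k + 1) := by
  have := one_le_floor_one_div_cfFrac hα hirr k
  have := cfA_succ_eq_floor hα hirr k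
  omega

theorem cfFrac_mul_cfA_add_cfFrac (hα : α ∈ Set.Ioo (0 : ℝ) 1) (hirr : Irrational α) (k : ℕ) :
    cfFrac α k * (cfA α (k + 1) + cfFrac α (k + 1)) = 1 := by
  have h0 := (cfFrac_mem_Ioo_and_irrational hα hirr k).1.1.ne'
  have ha : (cfA α (k + 1) : ℝ) = ⌊1 / cfFrac α k⌋ := by
    exact_mod_cast cfA_succ_eq_floor hα hirr k
  rw [ha, show cfFrac α (k + 1) = 1 / cfFrac α k - ⌊1 / cfFrac α k⌋ from rfl]
  field_simp
  ring

theorem one_le_cfQ (ha : ∀ k, 1 ≤ cfA α (k + 1)) (k : ℕ) : 1 ≤ cfQ α k := by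
  induction k using Nat.twoStepInduction with
  | zero => simp [cfQ]
  | one => exact ha 0
  | more k _ ih => simp only [cfQ]; nlinarith [ha (k + 1)]

theorem cfQ_mono (ha : ∀ k, 1 ≤ cfA α (k + 1)) : Monotone (cfQ α) := by
  refine monotone_nat_of_le_succ fun k => ?_
  cases k with
  | zero => exact ha 0
  | succ k => simp only [cfQ]; nlinarith [ha (k + 1), one_le_cfQ ha k]

theorem cfQ_lt_cfQ_add_two (ha : ∀ k, 1 ≤ cfA α (k + 1)) (k : ℕ) : cfQ α k < cfQ α (k + 2) := by
  show cfQ α k < cfA α (k + 2) * cfQ α (k + 1) + cfQ α k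
  nlinarith [ha (k + 1), one_le_cfQ ha (k + 1)]

theorem cfP_mul_cfQ_sub_cfP_mul_cfQ (k : ℕ) :
    (cfP α (k + 1) * cfQ α k - cfP α k * cfQ α (k + 1) : ℤ) = (-1) ^ k := by
  induction k with
  | zero => simp [cfP, cfQ]
  | succ k ih =>
    simp only [cfP, cfQ] at ih ⊢
    push_cast
    linear_combination -ih

end ContinuedFraction

/-- `θ_k = q_k α - p_k`; its sign is `(-1)^k`. -/
noncomputable def cfErr (α : ℝ) (k : ℕ) : ℝ := cfQ α k * α - cfP α k

/-- `D_k = |q_k α - p_k|`. -/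
noncomputable def cfDist (α : ℝ) (k : ℕ) : ℝ := (-1) ^ k * cfErr α k

section Approximation

variable {α : ℝ}

theorem cfErr_eq_neg_one_pow_mul_cfDist (k : ℕ) : cfErr α k = (-1) ^ k * cfDist α k := by
  rw [cfDist, ← mul_assoc, neg_one_pow_mul_self, one_mul]

theorem cfDist_add_two (k : ℕ) :
    cfDist α (k + 2) = cfDist α k - cfA α (k + 2) * cfDist α (k + 1) := by
  simp only [cfDist, cfErr, cfQ, cfP, pow_succ]
  push_cast
  ring

theorem cfDist_succ (hα : α ∈ Set.Ioo (0 : ℝ) 1) (hirr : Irrational α) (k : ℕ) :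
    cfDist α (k + 1) = cfFrac α (k + 1) * cfDist α k := by
  induction k with
  | zero =>
    have h := cfFrac_mul_cfA_add_cfFrac hα hirr 0
    simp only [cfDist, cfErr, cfQ, cfP, cfFrac, zero_add] at h ⊢
    push_cast
    linear_combination -h
  | succ k ih =>
    have h := cfFrac_mul_cfA_add_cfFrac hα hirr (k + 1)
    rw [cfDist_add_two]
    linear_combination (-(cfA α (k + 2) + cfFrac α (k + 2) : ℝ)) * ih - cfDist α k * h

theorem cfDist_pos (hα : α ∈ Set.Ioo (0 : ℝ) 1) (hirr : Irrational α) (k : ℕ) :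
    0 < cfDist α k := by
  induction k with
  | zero => simpa [cfDist, cfErr, cfQ, cfP] using hα.1
  | succ k ih =>
    rw [cfDist_succ hα hirr]
    exact mul_pos (cfFrac_mem_Ioo_and_irrational hα hirr (k + 1)).1.1 ih

theorem cfDist_strictAnti (hα : α ∈ Set.Ioo (0 : ℝ) 1) (hirr : Irrational α) :
    StrictAnti (cfDist α) := by
  refine strictAnti_nat_of_succ_lt fun k => ?_
  rw [cfDist_succ hα hirr]
  exact mul_lt_of_lt_one_left (cfDist_pos hα hirr k)
    (cfFrac_mem_Ioo_and_irrational hα hirr (k + 1)).1.2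

theorem abs_cfErr (hα : α ∈ Set.Ioo (0 : ℝ) 1) (hirr : Irrational α) (k : ℕ) :
    |cfErr α k| = cfDist α k := by
  rw [cfErr_eq_neg_one_pow_mul_cfDist, abs_neg_one_pow_mul, abs_of_pos (cfDist_pos hα hirr k)]

theorem mul_cfDist_add_cfDist_le (hα : α ∈ Set.Ioo (0 : ℝ) 1) (hirr : Irrational α) {k c : ℕ}
    (hc : c ≤ cfA α (k + 2)) : c * cfDist α (k + 1) + cfDist α (k + 2) ≤ cfDist α k := by
  have := cfDist_pos hα hirr (k + 1)
  rw [cfDist_add_two]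
  nlinarith [(Nat.cast_le (α := ℝ)).2 hc]

theorem neg_one_pow_mul_sum_Ico_mem_Icc (hα : α ∈ Set.Ioo (0 : ℝ) 1) (hirr : Irrational α)
    {c : ℕ → ℕ} (hc : ∀ k, 1 ≤ k → c k ≤ cfA α (k + 1)) {j N : ℕ} (hjN : j + 1 ≤ N) :
    (-1) ^ (j + 1) * ∑ k ∈ Finset.Ico (j + 1) N, (c k : ℝ) * cfErr α k ∈
      Set.Icc (cfDist α N - cfDist α (j + 1)) (cfDist α j - cfDist α N) := by
  obtain ⟨d, rfl⟩ := Nat.exists_eq_add_of_le hjN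
  induction d generalizing j with
  | zero =>
    have := (cfDist_strictAnti hα hirr).antitone (Nat.le_succ j)
    simp only [add_zero, Finset.Ico_self, Finset.sum_empty, mul_zero, sub_self, Set.mem_Icc,
      le_refl, true_and]
    linarith
  | succ d ih =>
    obtain ⟨ih₁, ih₂⟩ := ih (j := j + 1) le_self_add
    rw [show j + 1 + 1 + d = j + 1 + (d + 1) by ring, pow_succ] at ih₁ ih₂
    set tail := ∑ k ∈ Finset.Ico (j + 2) (j + 1 + (d + 1)), (c k : ℝ) * cfErr α k
    have hsum : (-1) ^ (j + 1) * ∑ k ∈ Finset.Ico (j + 1) (j + 1 + (d + 1)), (c k : ℝ) * cfErr α k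
        = c (j + 1) * cfDist α (j + 1) - (-1) ^ (j + 1) * -1 * tail := by
      rw [Finset.sum_eq_sum_Ico_succ_bot (by omega), cfErr_eq_neg_one_pow_mul_cfDist]
      linear_combination (c (j + 1) * cfDist α (j + 1) : ℝ) * neg_one_pow_mul_self (R := ℝ) (j + 1)
    have hbound := mul_cfDist_add_cfDist_le hα hirr (hc (j + 1) le_add_self)
    have hnonneg :=
      mul_nonneg (Nat.cast_nonneg (α := ℝ) (c (j + 1))) (cfDist_pos hα hirr (j + 1)).le
    rw [hsum, Set.mem_Icc]
    constructor <;> linarith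

theorem neg_one_pow_mul_sum_Ico_mem_Icc_of_first_ne_zero (hα : α ∈ Set.Ioo (0 : ℝ) 1)
    (hirr : Irrational α) {c : ℕ → ℕ} (hc : ∀ k, 1 ≤ k → c k ≤ cfA α (k + 1)) {M K N : ℕ}
    (hK : M ≤ K ∧ c K ≠ 0 ∧ ∀ j, M ≤ j → j < K → c j = 0) (hKN : K < N) :
    (-1) ^ K * ∑ k ∈ Finset.Ico M N, (c k : ℝ) * cfErr α k ∈
      Set.Icc (cfDist α N) (c K * cfDist α K + cfDist α (K + 1) - cfDist α N) := by
  obtain ⟨hMK, hcK, hzero⟩ := hK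
  obtain ⟨tail₁, tail₂⟩ := neg_one_pow_mul_sum_Ico_mem_Icc hα hirr hc hKN
  rw [pow_succ] at tail₁ tail₂
  have hsum : (-1) ^ K * ∑ k ∈ Finset.Ico M N, (c k : ℝ) * cfErr α k
      = c K * cfDist α K - (-1) ^ K * -1 * ∑ k ∈ Finset.Ico (K + 1) N, (c k : ℝ) * cfErr α k := by
    have hlow : ∑ k ∈ Finset.Ico M K, (c k : ℝ) * cfErr α k = 0 :=
      Finset.sum_eq_zero fun j hj => by
        rw [Finset.mem_Ico] at hj
        rw [hzero j hj.1 hj.2, Nat.cast_zero, zero_mul]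
    rw [← Finset.sum_Ico_consecutive _ hMK hKN.le, hlow, zero_add,
      Finset.sum_eq_sum_Ico_succ_bot hKN, cfErr_eq_neg_one_pow_mul_cfDist]
    linear_combination (c K * cfDist α K : ℝ) * neg_one_pow_mul_self (R := ℝ) K
  have hcK : (1 : ℝ) ≤ c K := by exact_mod_cast Nat.one_le_iff_ne_zero.2 hcK
  have hpos := cfDist_pos hα hirr K
  rw [hsum, Set.mem_Icc]
  constructor <;> nlinarith

theorem neg_one_pow_mul_sum_Ico_le_of_first_ne_zero (hα : α ∈ Set.Ioo (0 : ℝ) 1)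
    (hirr : Irrational α) {c : ℕ → ℕ} (hc : ∀ k, 1 ≤ k → c k ≤ cfA α (k + 1)) {m K T : ℕ}
    (hK : m + 1 ≤ K ∧ c K ≠ 0 ∧ ∀ j, m + 1 ≤ j → j < K → c j = 0) (hKT : K < T) :
    (-1) ^ K * ∑ k ∈ Finset.Ico (m + 1) T, (c k : ℝ) * cfErr α k
      ≤ cfDist α (K - 1) - cfDist α T := by
  obtain ⟨k, rfl⟩ : ∃ k, K = k + 1 := ⟨K - 1, by omega⟩
  have := mul_cfDist_add_cfDist_le hα hirr (hc (k + 1) le_add_self)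
  have := (neg_one_pow_mul_sum_Ico_mem_Icc_of_first_ne_zero hα hirr hc hK hKT).2
  rw [Nat.add_sub_cancel]
  linarith

theorem int_coeffs_eq_of_abs_lt {x y q q' : ℤ} {d d' : ℝ} (hq' : 1 ≤ q') (hqq : q' ≤ q)
    (hd' : 0 < d') (hdd : d' < d) (hs₁ : 1 ≤ x * q' + y * q) (hs₂ : x * q' + y * q < 2 * q)
    (h : |x * d - y * d'| < d) : (x = 0 ∧ y = 1) ∨ (x = 1 ∧ y = 1) := by
  obtain ⟨h₁, h₂⟩ := abs_lt.1 h
  rcases lt_trichotomy y 1 with hy | rfl | hy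
  · have hxy : 1 ≤ x + y := by nlinarith [mul_le_mul_of_nonpos_left hqq (by omega : y ≤ 0)]
    have hxy' : (1 : ℝ) ≤ x + y := by exact_mod_cast hxy
    have hy' : (y : ℝ) ≤ 0 := by exact_mod_cast (by omega : y ≤ 0)
    nlinarith [mul_le_mul_of_nonneg_right hxy' (by linarith : (0 : ℝ) ≤ d),
      mul_le_mul_of_nonpos_left (by linarith : -d ≤ d') hy']
  · rw [Int.cast_one, one_mul] at h₁ h₂
    have hx₁ : (-1 : ℝ) < x := by
      by_contra! hx
      nlinarith [mul_le_mul_of_nonneg_right hx (by linarith : (0 : ℝ) ≤ d)]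
    have hx₂ : (x : ℝ) < 2 := by
      by_contra! hx
      nlinarith [mul_le_mul_of_nonneg_right hx (by linarith : (0 : ℝ) ≤ d)]
    have : -1 < x ∧ x < 2 := ⟨by exact_mod_cast hx₁, by exact_mod_cast hx₂⟩
    omega
  · have hx : x ≤ -1 := by nlinarith
    have hx' : (x : ℝ) ≤ -1 := by exact_mod_cast hx
    have hy' : (2 : ℝ) ≤ y := by exact_mod_cast hy
    nlinarith [mul_le_mul_of_nonneg_right hx' (by linarith : (0 : ℝ) ≤ d),
      mul_le_mul_of_nonneg_right hy' hd'.le]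

theorem eq_cfQ_or_eq_cfQ_add_cfQ_of_abs_lt (hα : α ∈ Set.Ioo (0 : ℝ) 1) (hirr : Irrational α)
    {m s : ℕ} {r : ℤ} (hs₁ : 1 ≤ s) (hs₂ : s < 2 * cfQ α (m + 1))
    (h : |s * α - r| < cfDist α m) :
    (s = cfQ α (m + 1) ∧ s * α - r = cfErr α (m + 1)) ∨
      (s = cfQ α m + cfQ α (m + 1) ∧ s * α - r = cfErr α m + cfErr α (m + 1)) := by
  have hdet := cfP_mul_cfQ_sub_cfP_mul_cfQ (α := α) m
  have hsign := neg_one_pow_mul_self (R := ℤ) m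
  -- Cramer's rule for `(s, r) = x (q_m, p_m) + y (q_{m+1}, p_{m+1})`
  set x : ℤ := (-1) ^ m * (s * cfP α (m + 1) - r * cfQ α (m + 1))
  set y : ℤ := (-1) ^ m * (r * cfQ α m - s * cfP α m)
  have hq : x * cfQ α m + y * cfQ α (m + 1) = s := by
    linear_combination ((s : ℤ) * (-1) ^ m) * hdet + s * hsign
  have hp : x * cfP α m + y * cfP α (m + 1) = r := by
    linear_combination (r * (-1) ^ m) * hdet + r * hsign
  have herr : (s : ℝ) * α - r = x * cfErr α m + y * cfErr α (m + 1) := by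
    rw [← (by exact_mod_cast hq : ((x * cfQ α m + y * cfQ α (m + 1) : ℤ) : ℝ) = s),
      ← (by exact_mod_cast hp : ((x * cfP α m + y * cfP α (m + 1) : ℤ) : ℝ) = r)]
    push_cast
    simp only [cfErr]
    ring
  have habs : |(s : ℝ) * α - r| = |x * cfDist α m - y * cfDist α (m + 1)| := by
    rw [herr, cfErr_eq_neg_one_pow_mul_cfDist, cfErr_eq_neg_one_pow_mul_cfDist, pow_succ,
      show ∀ a : ℝ, x * (a * cfDist α m) + y * (a * -1 * cfDist α (m + 1))
        = a * (x * cfDist α m - y * cfDist α (m + 1)) from fun a => by ring,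
      abs_neg_one_pow_mul]
  have hqm : (1 : ℤ) ≤ cfQ α m := by exact_mod_cast one_le_cfQ (one_le_cfA_succ hα hirr) m
  have hqmono : (cfQ α m : ℤ) ≤ cfQ α (m + 1) := by
    exact_mod_cast cfQ_mono (one_le_cfA_succ hα hirr) m.le_succ
  rcases int_coeffs_eq_of_abs_lt hqm hqmono (cfDist_pos hα hirr (m + 1))
    ((cfDist_strictAnti hα hirr) m.lt_succ_self) (by omega) (by omega) (habs ▸ h)
    with ⟨hx, hy⟩ | ⟨hx, hy⟩
  · left
    rw [hx, hy] at hq herr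
    constructor
    · omega
    · rw [herr]; push_cast; ring
  · right
    rw [hx, hy] at hq herr
    constructor
    · omega
    · rw [herr]; push_cast; ring

theorem sum_mul_cfErr (c : ℕ → ℕ) (s : Finset ℕ) :
    ∑ k ∈ s, (c k : ℝ) * cfErr α k
      = (∑ k ∈ s, c k * cfQ α k : ℕ) * α - (∑ k ∈ s, c k * cfP α k : ℕ) := by
  push_cast
  rw [Finset.sum_mul, ← Finset.sum_sub_distrib]
  exact Finset.sum_congr rfl fun k _ => by rw [cfErr]; ring

theorem exists_int_sum_range_mul_sub_eq (c c' : ℕ → ℕ) {M T : ℕ} (hMT : M ≤ T)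
    (h : ∑ k ∈ Finset.range T, c k * cfQ α k + ∑ k ∈ Finset.range T, c' k * cfQ α k = cfQ α T) :
    ∃ r : ℤ, ((∑ k ∈ Finset.range M, c k * cfQ α k + ∑ k ∈ Finset.range M, c' k * cfQ α k : ℕ) : ℝ)
        * α - r = cfErr α T - ∑ k ∈ Finset.Ico M T, (c k : ℝ) * cfErr α k
          - ∑ k ∈ Finset.Ico M T, (c' k : ℝ) * cfErr α k := by
  refine ⟨cfP α T - (∑ k ∈ Finset.Ico M T, c k * cfP α k : ℕ)
    - (∑ k ∈ Finset.Ico M T, c' k * cfP α k : ℕ), ?_⟩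
  rw [← Finset.sum_range_add_sum_Ico _ hMT, ← Finset.sum_range_add_sum_Ico _ hMT] at h
  have h' := congrArg (Nat.cast : ℕ → ℝ) h
  rw [sum_mul_cfErr, sum_mul_cfErr, cfErr]
  push_cast at h' ⊢
  linear_combination α * h'

end Approximation

def OstrowskiDigits (α : ℝ) (c : ℕ → ℕ) : Prop :=
  c 0 ≤ cfA α 1 - 1 ∧
  (∀ k, 1 ≤ k → c k ≤ cfA α (k + 1)) ∧
  (∀ k, 1 ≤ k → c k = cfA α (k + 1) → c (k - 1) = 0)

section Ostrowski

variable {α : ℝ} {n : ℕ} {c : ℕ → ℕ}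

theorem OstrowskiRep.digits (h : OstrowskiRep α n c) : OstrowskiDigits α c :=
  ⟨h.1, h.2.1, h.2.2.1⟩

theorem OstrowskiRep.sum_le (h : OstrowskiRep α n c) (s : Finset ℕ) :
    ∑ k ∈ s, c k * cfQ α k ≤ n := by
  obtain ⟨N, hN, rfl⟩ := h.2.2.2
  calc ∑ k ∈ s, c k * cfQ α k = ∑ k ∈ s ∩ Finset.range (N + 1), c k * cfQ α k := by
        refine (Finset.sum_subset Finset.inter_subset_left fun k hks hk => ?_).symm
        rw [hN k (by simpa [hks] using hk), zero_mul]
    _ ≤ ∑ k ∈ Finset.range (N + 1), c k * cfQ α k :=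
        Finset.sum_le_sum_of_subset Finset.inter_subset_right

theorem OstrowskiRep.eq_sum_range (h : OstrowskiRep α n c) {T : ℕ}
    (hT : ∀ k, c k ≠ 0 → k < T) : n = ∑ k ∈ Finset.range T, c k * cfQ α k := by
  obtain ⟨N, hN, rfl⟩ := h.2.2.2
  rw [← Finset.sum_filter_ne_zero, ← Finset.sum_filter_ne_zero (s := Finset.range T)]
  congr 1
  ext k
  simp only [Finset.mem_filter, Finset.mem_range, ne_eq, mul_eq_zero, not_or]
  constructor
  · exact fun hk => ⟨hT k hk.2.1, hk.2⟩
  · exact fun hk => ⟨Nat.lt_succ_of_le (not_lt.1 fun h => hk.2.1 (hN k h)), hk.2⟩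

theorem OstrowskiDigits.sum_range_lt (ha : ∀ k, 1 ≤ cfA α (k + 1)) (hc : OstrowskiDigits α c)
    (J : ℕ) : ∑ k ∈ Finset.range J, c k * cfQ α k < cfQ α J := by
  obtain ⟨hc₀, hc, hrule⟩ := hc
  induction J using Nat.twoStepInduction with
  | zero => simp [cfQ]
  | one => simp only [Finset.sum_range_one, cfQ]; have : 1 ≤ cfA α 1 := ha 0; omega
  | more J ih₀ ih₁ =>
    rw [Finset.sum_range_succ,
      show cfQ α (J + 2) = cfA α (J + 2) * cfQ α (J + 1) + cfQ α J from rfl]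
    rcases (hc (J + 1) le_add_self : c (J + 1) ≤ cfA α (J + 2)).lt_or_eq with hlt | heq
    · calc ∑ k ∈ Finset.range (J + 1), c k * cfQ α k + c (J + 1) * cfQ α (J + 1)
          < (c (J + 1) + 1) * cfQ α (J + 1) := by rw [Nat.succ_mul]; omega
        _ ≤ cfA α (J + 2) * cfQ α (J + 1) := Nat.mul_le_mul_right _ hlt
        _ ≤ _ := Nat.le_add_right _ _
    · have hcJ : c J = 0 := hrule (J + 1) le_add_self heq
      rw [Finset.sum_range_succ, hcJ, zero_mul, add_zero, heq, add_comm (_ * _)]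
      exact Nat.add_lt_add_right ih₀ _

theorem OstrowskiRep.mul_cfQ_le (h : OstrowskiRep α n c) (k : ℕ) : c k * cfQ α k ≤ n := by
  simpa using h.sum_le {k}

theorem OstrowskiRep.lt_of_ne_zero (ha : ∀ k, 1 ≤ cfA α (k + 1)) (h : OstrowskiRep α n c)
    {k T : ℕ} (hk : c k ≠ 0) (hnT : n < cfQ α T) : k < T :=
  (cfQ_mono ha).reflect_lt <| (Nat.le_mul_of_pos_left _ (Nat.pos_of_ne_zero hk)).trans
    (h.mul_cfQ_le k) |>.trans_lt hnT

theorem OstrowskiRep.cfQ_lt (ha : ∀ k, 1 ≤ cfA α (k + 1)) (h : OstrowskiRep α n c) {j k : ℕ}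
    (hjk : j ≠ k) (hj : c j ≠ 0) (hk : c k ≠ 0) :
    cfQ α k < n := by
  have hsum := h.sum_le {j, k}
  rw [Finset.sum_pair hjk] at hsum
  have := one_le_cfQ ha j
  have := Nat.le_mul_of_pos_left (cfQ α k) (Nat.pos_of_ne_zero hk)
  nlinarith [Nat.pos_of_ne_zero hj]

theorem sum_range_lt_or_neg_one_pow_mul_sum_Ico_le (hα : α ∈ Set.Ioo (0 : ℝ) 1)
    (hirr : Irrational α) (hc : OstrowskiDigits α c) {m K T : ℕ}
    (hK : m + 1 ≤ K ∧ c K ≠ 0 ∧ ∀ j, m + 1 ≤ j → j < K → c j = 0) (hKT : K < T)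
    (hpar : K % 2 = (m + 1) % 2) :
    ∑ k ∈ Finset.range (m + 1), c k * cfQ α k < cfQ α m ∨
      (-1) ^ K * ∑ k ∈ Finset.Ico (m + 1) T, (c k : ℝ) * cfErr α k
        ≤ cfDist α m - cfDist α (m + 1) - cfDist α T := by
  have ha := one_le_cfA_succ hα hirr
  rcases (show K = m + 1 ∨ m + 3 ≤ K by omega) with rfl | hK3
  · rcases (hc.2.1 (m + 1) le_add_self).lt_or_eq with hlt | heq
    · have := (neg_one_pow_mul_sum_Ico_mem_Icc_of_first_ne_zero hα hirr hc.2.1 hK hKT).2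
      have : ((c (m + 1) + 1 : ℕ) : ℝ) * cfDist α (m + 1) + cfDist α (m + 2) ≤ cfDist α m :=
        mul_cfDist_add_cfDist_le hα hirr hlt
      push_cast at this
      right
      linarith
    · have hcm : c m = 0 := hc.2.2 (m + 1) le_add_self heq
      left
      simpa only [Finset.sum_range_succ, hcm, zero_mul, add_zero] using hc.sum_range_lt ha m
  · have := neg_one_pow_mul_sum_Ico_le_of_first_ne_zero hα hirr hc.2.1 hK hKT
    have := (cfDist_strictAnti hα hirr).antitone (show m + 2 ≤ K - 1 by omega)
    have : ((1 : ℕ) : ℝ) * cfDist α (m + 1) + cfDist α (m + 2) ≤ cfDist α m :=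
      mul_cfDist_add_cfDist_le hα hirr (ha (m + 1))
    rw [Nat.cast_one, one_mul] at this
    right
    linarith

theorem false_of_first_high_digit_parity_ne (hα : α ∈ Set.Ioo (0 : ℝ) 1) (hirr : Irrational α)
    {c c' : ℕ → ℕ} (hc : OstrowskiDigits α c) (hc' : OstrowskiDigits α c') {m T K K' : ℕ}
    (hK : m + 1 ≤ K ∧ c K ≠ 0 ∧ ∀ j, m + 1 ≤ j → j < K → c j = 0)
    (hK' : m + 1 ≤ K' ∧ c' K' ≠ 0 ∧ ∀ j, m + 1 ≤ j → j < K' → c' j = 0)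
    (hKT : K < T) (hK'T : K' < T) (hpar : K % 2 = (m + 1) % 2) (hpar' : K' % 2 ≠ (m + 1) % 2)
    (hs : 1 ≤ ∑ k ∈ Finset.range (m + 1), c k * cfQ α k
      + ∑ k ∈ Finset.range (m + 1), c' k * cfQ α k) {r : ℤ}
    (heq : ((∑ k ∈ Finset.range (m + 1), c k * cfQ α k
      + ∑ k ∈ Finset.range (m + 1), c' k * cfQ α k : ℕ) : ℝ) * α - r
        = cfErr α T - ∑ k ∈ Finset.Ico (m + 1) T, (c k : ℝ) * cfErr α k
          - ∑ k ∈ Finset.Ico (m + 1) T, (c' k : ℝ) * cfErr α k) : False := by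
  set u := ∑ k ∈ Finset.range (m + 1), c k * cfQ α k
  set u' := ∑ k ∈ Finset.range (m + 1), c' k * cfQ α k
  have hεK : (-1 : ℝ) ^ K = (-1) ^ (m + 1) := by
    rw [neg_one_pow_eq_pow_mod_two, hpar, ← neg_one_pow_eq_pow_mod_two]
  have hεK' : (-1 : ℝ) ^ K' = -(-1) ^ (m + 1) := by
    rw [neg_one_pow_eq_pow_mod_two, show K' % 2 = (m + 1 + 1) % 2 by omega,
      ← neg_one_pow_eq_pow_mod_two, pow_succ, mul_neg_one]
  obtain ⟨hσ₁, -⟩ := neg_one_pow_mul_sum_Ico_mem_Icc_of_first_ne_zero hα hirr hc.2.1 hK hKT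
  have hσ'₁ := (neg_one_pow_mul_sum_Ico_mem_Icc_of_first_ne_zero hα hirr hc'.2.1 hK' hK'T).1
  have hσ₂ := neg_one_pow_mul_sum_Ico_le_of_first_ne_zero hα hirr hc.2.1 hK hKT
  have hσ'₂ := neg_one_pow_mul_sum_Ico_le_of_first_ne_zero hα hirr hc'.2.1 hK' hK'T
  have hσ₃ := sum_range_lt_or_neg_one_pow_mul_sum_Ico_le hα hirr hc hK hKT hpar
  rw [hεK] at hσ₁ hσ₂ hσ₃
  rw [hεK', neg_mul] at hσ'₁ hσ'₂
  have hθT : |(-1) ^ (m + 1) * cfErr α T| ≤ cfDist α T := by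
    rw [abs_neg_one_pow_mul, abs_cfErr hα hirr]
  have hθm : (-1) ^ (m + 1) * cfErr α m = -cfDist α m := by
    rw [pow_succ, cfDist]; ring
  have hx : (-1) ^ (m + 1) * (((u + u' : ℕ) : ℝ) * α - r) = (-1) ^ (m + 1) * cfErr α T
      - (-1) ^ (m + 1) * ∑ k ∈ Finset.Ico (m + 1) T, (c k : ℝ) * cfErr α k
      - (-1) ^ (m + 1) * ∑ k ∈ Finset.Ico (m + 1) T, (c' k : ℝ) * cfErr α k := by
    rw [heq]; ring
  generalize (-1 : ℝ) ^ (m + 1) * cfErr α T = t at hθT hx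
  generalize (-1 : ℝ) ^ (m + 1) * ∑ k ∈ Finset.Ico (m + 1) T, (c k : ℝ) * cfErr α k = σ
    at hσ₁ hσ₂ hσ₃ hx
  generalize (-1 : ℝ) ^ (m + 1) * ∑ k ∈ Finset.Ico (m + 1) T, (c' k : ℝ) * cfErr α k = σ'
    at hσ'₁ hσ'₂ hx
  obtain ⟨ht₁, ht₂⟩ := abs_le.1 hθT
  have hanti := (cfDist_strictAnti hα hirr).antitone
  have hDK := hanti (show m ≤ K - 1 by omega)
  have hDK' := hanti (show m + 1 ≤ K' - 1 by omega)
  have hDm : cfDist α (m + 1) < cfDist α m := cfDist_strictAnti hα hirr (by omega)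
  have hDT := cfDist_pos hα hirr T
  have habs : |((u + u' : ℕ) : ℝ) * α - r| < cfDist α m := by
    rw [← abs_neg_one_pow_mul (m + 1), hx, abs_lt]
    constructor <;> linarith
  have hu := hc.sum_range_lt (one_le_cfA_succ hα hirr) (m + 1)
  have hu' := hc'.sum_range_lt (one_le_cfA_succ hα hirr) (m + 1)
  rcases eq_cfQ_or_eq_cfQ_add_cfQ_of_abs_lt hα hirr hs (by omega) habs with ⟨-, hθ⟩ | ⟨hs, hθ⟩
  · rw [hθ, ← cfDist] at hx
    linarith
  · rw [hθ, mul_add, hθm, ← cfDist] at hx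
    rcases hσ₃ with hu | hσ₃
    · omega
    · linarith

end Ostrowski

theorem stmt19_general (α : ℝ) (hα : α ∈ Set.Ioo (0:ℝ) 1) (hirr : Irrational α)
    (M : ℕ) (hM : 1 ≤ M)
    (n : ℕ) (b : ℕ → ℕ) (hb : OstrowskiRep α n b)
    (hlow : ∃ k, k < M ∧ b k ≠ 0)
    (T : ℕ) (hT : n ≤ cfQ α (T - 2))
    (b' : ℕ → ℕ) (hb' : OstrowskiRep α (cfQ α T - n) b')
    (K K' : ℕ)
    (hK : M ≤ K ∧ b K ≠ 0 ∧ ∀ j, M ≤ j → j < K → b j = 0)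
    (hK' : M ≤ K' ∧ b' K' ≠ 0 ∧ ∀ j, M ≤ j → j < K' → b' j = 0) :
    K % 2 = K' % 2 := by
  obtain ⟨m, rfl⟩ : ∃ m, M = m + 1 := ⟨M - 1, by omega⟩
  obtain ⟨k₀, hk₀M, hk₀⟩ := hlow
  have ha := one_le_cfA_succ hα hirr
  have hKn := hb.cfQ_lt ha (by omega) hk₀ hK.2.1
  have hKT : K < T - 2 := (cfQ_mono ha).reflect_lt (hKn.trans_le hT)
  have hnT : n < cfQ α T := by
    obtain ⟨T, rfl⟩ : ∃ T', T = T' + 2 := ⟨T - 2, by omega⟩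
    exact hT.trans_lt (cfQ_lt_cfQ_add_two ha T)
  have hsupp : ∀ k, b k ≠ 0 → k < T := fun k hk => hb.lt_of_ne_zero ha hk hnT
  have hsupp' : ∀ k, b' k ≠ 0 → k < T := fun k hk => hb'.lt_of_ne_zero ha hk (by omega)
  obtain ⟨r, hr⟩ := exists_int_sum_range_mul_sub_eq b b' (hK.1.trans (hsupp K hK.2.1).le)
    (by rw [← hb.eq_sum_range hsupp, ← hb'.eq_sum_range hsupp']; omega)
  have hs : 0 < ∑ k ∈ Finset.range (m + 1), b k * cfQ α k :=
    Finset.sum_pos' (fun _ _ => Nat.zero_le _) ⟨k₀, Finset.mem_range.2 hk₀M,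
      Nat.mul_pos (Nat.pos_of_ne_zero hk₀) (one_le_cfQ ha k₀)⟩
  by_contra hne
  by_cases hpar : K % 2 = (m + 1) % 2
  · exact false_of_first_high_digit_parity_ne hα hirr hb.digits hb'.digits hK hK'
      (hsupp K hK.2.1) (hsupp' K' hK'.2.1) hpar (by omega) (by omega) hr
  · exact false_of_first_high_digit_parity_ne hα hirr hb'.digits hb.digits hK' hK
      (hsupp' K' hK'.2.1) (hsupp K hK.2.1) (by omega) hpar (by omega)
      (by push_cast at hr ⊢; linarith)

theorem stmt19 (α : ℝ) (hα : α ∈ Set.Ioo (0:ℝ) 1) (hirr : Irrational α)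
    (M : ℕ) (hM : 1 ≤ M)
    (n : ℕ) (b : ℕ → ℕ) (hb : OstrowskiRep α n b)
    (hlow : ∃ k, k < M ∧ b k ≠ 0) (hhigh : ∃ k, M ≤ k ∧ b k ≠ 0)
    (T : ℕ) (hT : n ≤ cfQ α (T - 2))
    (b' : ℕ → ℕ) (hb' : OstrowskiRep α (cfQ α T - n) b')
    (K K' : ℕ)
    (hK : M ≤ K ∧ b K ≠ 0 ∧ ∀ j, M ≤ j → j < K → b j = 0)
    (hK' : M ≤ K' ∧ b' K' ≠ 0 ∧ ∀ j, M ≤ j → j < K' → b' j = 0) :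
    K % 2 = K' % 2 :=
  stmt19_general α hα hirr M hM n b hb hlow T hT b' hb' K K' hK hK'
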